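/- Let K be a graph consisting of pairwise disjoint connected graphs S_1,…,S_r together with an additional vertex u adjacent to exactly one vertex v_j in each S_j. If minrk_q(S_j − v_j) = minrk_q(S_j) for every j ∈ [r], then minrk_q(K) = 1 + Σ_{j=1}^r minrk_q(S_j). -/

import Mathlib

open scoped Classical

/-- A matrix `M` fits the graph `G` if its diagonal entries are nonzero and its
entries at distinct non-adjacent pairs of vertices are zero. -/
def Fits {V F : Type} [Fintype V] [Field F]
    (G : SimpleGraph V) (M : Matrix V V F) : Prop :=
  (∀ u, M u u ≠ 0) ∧ ∀ u v, u ≠ v → ¬ G.Adj u v → M u v = 0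

/-- The min-rank of `G` over the field `F`: the minimum rank of a matrix fitting `G`. -/
noncomputable def minrk (F : Type) [Field F] {V : Type} [Fintype V]
    (G : SimpleGraph V) : ℕ :=
  sInf {r : ℕ | ∃ M : Matrix V V F, Fits G M ∧ M.rank = r}

/-!
Gluing optimal matrices of the branches and a `1` at `u` block-diagonally gives a matrix
fitting `K`, so `minrk K ≤ 1 + ∑ j, minrk (S j)`. Conversely, deleting every `v j` leaves `u`
isolated, so any matrix fitting `K` contains a block-diagonal submatrix with blocks `{u}` and
`S j - v j`; its rank is at least `1 + ∑ j, minrk (S j - v j)`, which is `1 + ∑ j, minrk (S j)`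
by the no-drop hypothesis.
-/

open Module Matrix Function

lemma LinearMap.finrank_range_piMap {F ι : Type*} [Field F] [Fintype ι] {φ ψ : ι → Type*}
    [∀ i, AddCommGroup (φ i)] [∀ i, Module F (φ i)] [∀ i, AddCommGroup (ψ i)]
    [∀ i, Module F (ψ i)] [∀ i, FiniteDimensional F (ψ i)] (f : ∀ i, φ i →ₗ[F] ψ i) :
    finrank F (range (piMap f)) = ∑ i, finrank F (range (f i)) := by
  have hrange : range (piMap f) = range (piMap fun i => (range (f i)).subtype) :=
    SetLike.coe_injective <| by
      simp only [coe_range, coe_piMap, Set.range_piMap, Submodule.coe_subtype,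
        Subtype.range_coe_subtype]
      rfl
  rw [hrange, finrank_range_of_inj (Injective.piMap fun i => Subtype.val_injective),
    Module.finrank_pi_fintype]

theorem Matrix.rank_blockDiagonal' {F ι : Type*} [Field F] [Fintype ι] [DecidableEq ι]
    {m n : ι → Type*} [∀ i, Fintype (m i)] [∀ i, Fintype (n i)]
    (B : ∀ i, Matrix (m i) (n i) F) :
    (blockDiagonal' B).rank = ∑ i, (B i).rank := by
  have hmul : (blockDiagonal' B).mulVecLin =
      (LinearEquiv.piCurry F fun _ _ => F).symm.toLinearMap ∘ₗ
        LinearMap.piMap (fun i => (B i).mulVecLin) ∘ₗ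
          (LinearEquiv.piCurry F fun _ _ => F).toLinearMap := by
    ext x ⟨i, a⟩
    simp [mulVec, dotProduct, Fintype.sum_sigma, blockDiagonal'_apply, Sigma.uncurry, Sigma.curry]
  rw [rank, hmul, LinearMap.range_comp,
    LinearMap.range_comp_of_range_eq_top _ (LinearEquiv.range _), LinearEquiv.finrank_map_eq,
    LinearMap.finrank_range_piMap]
  rfl

section

variable {F V : Type} [Field F] [Fintype V] {G : SimpleGraph V}

lemma fits_one : Fits G (1 : Matrix V V F) :=
  ⟨fun _ => by simp, fun _ _ hab _ => one_apply_ne hab⟩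

lemma Fits.induce {M : Matrix V V F} (hM : Fits G M) (s : Set V) :
    Fits (G.induce s) (M.submatrix (↑) (↑)) :=
  ⟨fun a => hM.1 a, fun a b hab hnadj =>
    hM.2 a b (Subtype.coe_ne_coe.mpr hab) (by simpa using hnadj)⟩

lemma minrk_le_rank {M : Matrix V V F} (hM : Fits G M) : minrk F G ≤ M.rank :=
  Nat.sInf_le ⟨M, hM, rfl⟩

variable (F) in
lemma exists_fits_rank_eq_minrk (G : SimpleGraph V) :
    ∃ M : Matrix V V F, Fits G M ∧ M.rank = minrk F G :=
  Nat.sInf_mem (s := {r | ∃ M : Matrix V V F, Fits G M ∧ M.rank = r}) ⟨_, 1, fits_one, rfl⟩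

lemma Fits.rank_eq_one_of_unique [Unique V] {M : Matrix V V F} (hM : Fits G M) : M.rank = 1 := by
  rw [rank_of_det_ne_zero (by simpa [det_unique] using hM.1 default), Fintype.card_unique]

lemma minrk_eq_one_of_unique [Unique V] : minrk F G = 1 := by
  obtain ⟨M, hM, hrank⟩ := exists_fits_rank_eq_minrk F G
  rw [← hrank, hM.rank_eq_one_of_unique]

lemma minrk_le_sum_minrk_induce {ι : Type} [Fintype ι] (T : ι → Set V)
    (hcover : ∀ a, ∃ i, a ∈ T i) :
    minrk F G ≤ ∑ i, minrk F (G.induce (T i)) := by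
  choose B hB hrank using fun i => exists_fits_rank_eq_minrk F (G.induce (T i))
  choose p hp using hcover
  let g : V → Σ i, T i := fun a => ⟨p a, a, hp a⟩
  have hfits : Fits G ((blockDiagonal' B).submatrix g g) := by
    refine ⟨fun a => by simpa [g] using (hB (p a)).1 ⟨a, hp a⟩, fun a b hab hnadj => ?_⟩
    suffices ∀ x y : Σ i, ↥(T i), (x.2 : V) ≠ y.2 → ¬ G.Adj x.2 y.2 →
        blockDiagonal' B x y = 0 from this (g a) (g b) hab hnadj
    rintro ⟨i, x⟩ ⟨j, y⟩ hxy hxy'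
    by_cases hij : i = j
    · subst hij
      rw [blockDiagonal'_apply_eq]
      exact (hB i).2 x y (ne_of_apply_ne _ hxy) (by simpa using hxy')
    · exact blockDiagonal'_apply_ne B x y hij
  calc minrk F G ≤ ((blockDiagonal' B).submatrix g g).rank := minrk_le_rank hfits
    _ ≤ (blockDiagonal' B).rank := rank_submatrix_le _ _ _
    _ = ∑ i, minrk F (G.induce (T i)) := by simp [rank_blockDiagonal', hrank]

lemma sum_minrk_induce_le_minrk {ι : Type} [Fintype ι] (T : ι → Set V)
    (hdisj : Pairwise (Disjoint on T))
    (hnadj : ∀ i j, i ≠ j → ∀ a ∈ T i, ∀ b ∈ T j, ¬ G.Adj a b) :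
    ∑ i, minrk F (G.induce (T i)) ≤ minrk F G := by
  obtain ⟨M, hM, hrank⟩ := exists_fits_rank_eq_minrk F G
  let f : (Σ i, ↥(T i)) → V := fun x => x.2
  have hblock : M.submatrix f f =
      blockDiagonal' fun i => M.submatrix ((↑) : T i → V) (↑) := by
    ext ⟨i, a⟩ ⟨j, b⟩
    by_cases hij : i = j
    · subst hij
      rw [blockDiagonal'_apply_eq]
      rfl
    · rw [blockDiagonal'_apply_ne _ _ _ hij]
      exact hM.2 a b (fun h => (hdisj hij).ne_of_mem a.2 b.2 h) (hnadj i j hij a a.2 b b.2)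
  calc ∑ i, minrk F (G.induce (T i))
      ≤ ∑ i, (M.submatrix ((↑) : T i → V) (↑)).rank :=
        Finset.sum_le_sum fun i _ => minrk_le_rank (hM.induce (T i))
    _ = (M.submatrix f f).rank := by
        rw [hblock, rank_blockDiagonal']
    _ ≤ minrk F G := hrank ▸ rank_submatrix_le _ _ _

lemma pairwise_disjoint_option_elim {α ι : Type*} {s : Set α} {S : ι → Set α}
    (hs : ∀ i, Disjoint s (S i)) (hS : Pairwise (Disjoint on S)) :
    Pairwise (Disjoint on fun o : Option ι => o.elim s S) := by
  rintro (_ | i) (_ | j) hij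
  exacts [absurd rfl hij, hs j, (hs i).symm, hS fun h => hij (congrArg some h)]

lemma minrk_le_one_add_sum_minrk_induce {ι : Type} [Fintype ι] (u : V) (S : ι → Set V)
    (hcover : {u} ∪ ⋃ j, S j = Set.univ) :
    minrk F G ≤ 1 + ∑ j, minrk F (G.induce (S j)) := by
  let T : Option ι → Set V := fun o => o.elim {u} S
  have hT_none : minrk F (G.induce (T none)) = 1 :=
    have : Unique (T none) := Set.uniqueSingleton u
    minrk_eq_one_of_unique
  have hcoverT : ∀ a, ∃ o, a ∈ T o := by
    intro a
    rcases (hcover ▸ Set.mem_univ a : a ∈ {u} ∪ ⋃ j, S j) with rfl | ha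
    · exact ⟨none, rfl⟩
    · obtain ⟨j, hj⟩ := Set.mem_iUnion.mp ha
      exact ⟨some j, hj⟩
  calc minrk F G ≤ ∑ o, minrk F (G.induce (T o)) := minrk_le_sum_minrk_induce T hcoverT
    _ = 1 + ∑ j, minrk F (G.induce (S j)) := by
      rw [Fintype.sum_option, hT_none]
      rfl

lemma one_add_sum_minrk_induce_le_minrk {ι : Type} [Fintype ι] (u : V) (S : ι → Set V)
    (v : ι → V) (hdisj : Pairwise (Disjoint on S)) (hu : ∀ j, u ∉ S j)
    (hv : ∀ j, v j ∈ S j)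
    (hnbr : ∀ b, G.Adj u b → ∃ j, b = v j)
    (hcross : ∀ i j, i ≠ j → ∀ a ∈ S i, ∀ b ∈ S j, ¬ G.Adj a b) :
    1 + ∑ j, minrk F (G.induce (S j \ {v j})) ≤ minrk F G := by
  let T : Option ι → Set V := fun o => o.elim {u} fun j => S j \ {v j}
  have hT_none : minrk F (G.induce (T none)) = 1 :=
    have : Unique (T none) := Set.uniqueSingleton u
    minrk_eq_one_of_unique
  have hdisjT : Pairwise (Disjoint on T) :=
    pairwise_disjoint_option_elim (fun j => Set.disjoint_singleton_left.mpr fun h => hu j h.1)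
      fun i j h => (hdisj h).mono Set.sdiff_subset Set.sdiff_subset
  have hu_isolated : ∀ j, ∀ b ∈ S j \ {v j}, ¬ G.Adj u b := by
    rintro j b ⟨hbj, hbv⟩ hub
    obtain ⟨k, rfl⟩ := hnbr b hub
    obtain rfl : k = j := by_contra fun h => Set.disjoint_left.mp (hdisj h) (hv k) hbj
    exact hbv rfl
  have hcrossT : ∀ o o', o ≠ o' → ∀ a ∈ T o, ∀ b ∈ T o', ¬ G.Adj a b := by
    rintro (_ | i) (_ | j) hij a ha b hb
    · exact absurd rfl hij
    · exact Set.mem_singleton_iff.mp ha ▸ hu_isolated j b hb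
    · exact fun h => hu_isolated i a ha (Set.mem_singleton_iff.mp hb ▸ h.symm)
    · exact hcross i j (fun h => hij (congrArg some h)) a ha.1 b hb.1
  have hsum := sum_minrk_induce_le_minrk (F := F) T hdisjT hcrossT
  rw [Fintype.sum_option, hT_none] at hsum
  convert hsum using 3
  -- the two sides differ only in the `Fintype` instance on `S j \ {v j}`
  congr!

end

theorem minrk_star_of_branches_of_no_drop_general {W F : Type} [Fintype W] [Field F]
    (G : SimpleGraph W) (r : ℕ) (S : Fin r → Set W) (u : W) (v : Fin r → W)
    (hdisj : ∀ i j, i ≠ j → Disjoint (S i) (S j))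
    (hu : ∀ j, u ∉ S j)
    (hv : ∀ j, v j ∈ S j)
    (hcover : {u} ∪ (⋃ j, S j) = Set.univ)
    (hedges : ∀ a b, G.Adj a b →
      (∃ j, a ∈ S j ∧ b ∈ S j) ∨ (a = u ∧ ∃ j, b = v j) ∨ (b = u ∧ ∃ j, a = v j))
    (hnodrop : ∀ j, minrk F (G.induce (S j \ {v j})) = minrk F (G.induce (S j))) :
    minrk F G = 1 + ∑ j, minrk F (G.induce (S j)) := by
  have hnbr : ∀ b, G.Adj u b → ∃ j, b = v j := by
    intro b hub
    rcases hedges u b hub with ⟨k, huk, -⟩ | ⟨-, hb⟩ | ⟨rfl, -⟩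
    · exact absurd huk (hu k)
    · exact hb
    · exact (G.irrefl hub).elim
  have hcross : ∀ i j, i ≠ j → ∀ a ∈ S i, ∀ b ∈ S j, ¬ G.Adj a b := by
    intro i j hij a ha b hb hab
    rcases hedges a b hab with ⟨k, hak, hbk⟩ | ⟨rfl, -⟩ | ⟨rfl, -⟩
    · obtain rfl : i = k := by_contra fun h => Set.disjoint_left.mp (hdisj i k h) ha hak
      exact Set.disjoint_left.mp (hdisj i j hij) hbk hb
    · exact hu i ha
    · exact hu j hb
  refine le_antisymm (minrk_le_one_add_sum_minrk_induce u S hcover) ?_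
  simpa only [hnodrop] using
    one_add_sum_minrk_induce_le_minrk (F := F) u S v (fun i j => hdisj i j) hu hv hnbr hcross

theorem minrk_star_of_branches_of_no_drop {W F : Type} [Fintype W] [Field F] [Fintype F]
    (G : SimpleGraph W) (r : ℕ) (S : Fin r → Set W) (u : W) (v : Fin r → W)
    (hdisj : ∀ i j, i ≠ j → Disjoint (S i) (S j))
    (hu : ∀ j, u ∉ S j)
    (hv : ∀ j, v j ∈ S j)
    (hcover : {u} ∪ (⋃ j, S j) = Set.univ)
    (hconn : ∀ j, (G.induce (S j)).Connected)
    (hadj : ∀ j, G.Adj u (v j))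
    (hedges : ∀ a b, G.Adj a b →
      (∃ j, a ∈ S j ∧ b ∈ S j) ∨ (a = u ∧ ∃ j, b = v j) ∨ (b = u ∧ ∃ j, a = v j))
    (hnodrop : ∀ j, minrk F (G.induce (S j \ {v j})) = minrk F (G.induce (S j))) :
    minrk F G = 1 + ∑ j, minrk F (G.induce (S j)) :=
  minrk_star_of_branches_of_no_drop_general G r S u v hdisj hu hv hcover hedges hnodrop
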